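/- In the symmetric group S₂₄ on {1,…,24}, let B = (1 8 10 5 2 7 9 6)(15 17 24 19 16 18 23 20), D = (3 5 12 7 4 6 11 8)(15 17 24 19 16 18 23 20), E = (3 5 12 7 4 6 11 8)(13 20 22 17 14 19 21 18), and g = (3 15 5 17 12 24 7 19 4 16 6 18 11 23 8 20). Then g² = D, D B D = B D B, and D E D = E D E, but (E D)³ g (E D)⁻³ ≠ (B D)³ g (B D)⁻³. Consequently S₂₄ does not have property T(2,SK). -/

import Mathlib

/-- Relators of G₁(SK) = ⟨B, D, E | B D B = D B D, E D E = D E D⟩, with B, D, E = 0, 1, 2. -/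
def G1SKRels : Set (FreeGroup (Fin 3)) :=
  let B : FreeGroup (Fin 3) := FreeGroup.of 0
  let D : FreeGroup (Fin 3) := FreeGroup.of 1
  let E : FreeGroup (Fin 3) := FreeGroup.of 2
  {B * D * B * (D * B * D)⁻¹,
   E * D * E * (D * E * D)⁻¹}

/-- The knot group of the square knot. -/
abbrev G1SK := PresentedGroup G1SKRels

/-- A group `H` has property T(n,SK) if for every homomorphism ρ : G₁(SK) → H and every
g ∈ H with gⁿ = ρ(D), one has (ρ(E)ρ(D))³ g (ρ(E)ρ(D))⁻³ = (ρ(B)ρ(D))³ g (ρ(B)ρ(D))⁻³. -/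
def PropertyTSK (n : ℕ) (H : Type*) [Group H] : Prop :=
  ∀ (ρ : G1SK →* H) (g : H), g ^ n = ρ (PresentedGroup.of 1) →
    (ρ (PresentedGroup.of 2) * ρ (PresentedGroup.of 1)) ^ 3 * g *
      ((ρ (PresentedGroup.of 2) * ρ (PresentedGroup.of 1)) ^ 3)⁻¹ =
    (ρ (PresentedGroup.of 0) * ρ (PresentedGroup.of 1)) ^ 3 * g *
      ((ρ (PresentedGroup.of 0) * ρ (PresentedGroup.of 1)) ^ 3)⁻¹

/-- The permutation (1 8 10 5 2 7 9 6)(15 17 24 19 16 18 23 20) of {1, …, 24},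
written 0-indexed on `Fin 24`. -/
def permB : Equiv.Perm (Fin 24) :=
  ([0, 7, 9, 4, 1, 6, 8, 5] : List (Fin 24)).formPerm *
  ([14, 16, 23, 18, 15, 17, 22, 19] : List (Fin 24)).formPerm

/-- The permutation (3 5 12 7 4 6 11 8)(15 17 24 19 16 18 23 20) of {1, …, 24},
written 0-indexed on `Fin 24`. -/
def permD : Equiv.Perm (Fin 24) :=
  ([2, 4, 11, 6, 3, 5, 10, 7] : List (Fin 24)).formPerm *
  ([14, 16, 23, 18, 15, 17, 22, 19] : List (Fin 24)).formPerm

/-- The permutation (3 5 12 7 4 6 11 8)(13 20 22 17 14 19 21 18) of {1, …, 24},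
written 0-indexed on `Fin 24`. -/
def permE : Equiv.Perm (Fin 24) :=
  ([2, 4, 11, 6, 3, 5, 10, 7] : List (Fin 24)).formPerm *
  ([12, 19, 21, 16, 13, 18, 20, 17] : List (Fin 24)).formPerm

/-- The permutation (3 15 5 17 12 24 7 19 4 16 6 18 11 23 8 20) of {1, …, 24},
written 0-indexed on `Fin 24`. -/
def permG : Equiv.Perm (Fin 24) :=
  ([2, 14, 4, 16, 11, 23, 6, 18, 3, 15, 5, 17, 10, 22, 7, 19] : List (Fin 24)).formPerm

section SquareKnotGroup

variable {H : Type*} [Group H]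

theorem G1SK.exists_monoidHom {b d e : H} (hbd : b * d * b = d * b * d)
    (hed : e * d * e = d * e * d) :
    ∃ ρ : G1SK →* H, ρ (PresentedGroup.of 0) = b ∧ ρ (PresentedGroup.of 1) = d ∧
      ρ (PresentedGroup.of 2) = e := by
  have hrels : ∀ r ∈ G1SKRels, FreeGroup.lift ![b, d, e] r = 1 := by
    rintro r (rfl | rfl) <;>
      simp only [map_mul, map_inv, FreeGroup.lift_apply_of, Matrix.cons_val_zero,
        Matrix.cons_val_one, mul_inv_eq_one]
    exacts [hbd, hed]
  exact ⟨PresentedGroup.toGroup hrels, PresentedGroup.toGroup.of hrels,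
    PresentedGroup.toGroup.of hrels, PresentedGroup.toGroup.of hrels⟩

theorem not_propertyTSK_of_counterexample {n : ℕ} {b d e g : H}
    (hbd : b * d * b = d * b * d) (hed : e * d * e = d * e * d) (hg : g ^ n = d)
    (hne : (e * d) ^ 3 * g * ((e * d) ^ 3)⁻¹ ≠ (b * d) ^ 3 * g * ((b * d) ^ 3)⁻¹) :
    ¬ PropertyTSK n H := by
  obtain ⟨ρ, hb, hd, he⟩ := G1SK.exists_monoidHom hbd hed
  intro hT
  apply hne
  simpa only [hb, hd, he] using hT ρ g (hd ▸ hg)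

end SquareKnotGroup

set_option maxRecDepth 10000 in
theorem stmt_16 :
    permG ^ 2 = permD ∧
    permD * permB * permD = permB * permD * permB ∧
    permD * permE * permD = permE * permD * permE ∧
    (permE * permD) ^ 3 * permG * ((permE * permD) ^ 3)⁻¹ ≠
      (permB * permD) ^ 3 * permG * ((permB * permD) ^ 3)⁻¹ ∧
    ¬ PropertyTSK 2 (Equiv.Perm (Fin 24)) := by
  have hgd : permG ^ 2 = permD := by decide
  have hdbd : permD * permB * permD = permB * permD * permB := by decide
  have hded : permD * permE * permD = permE * permD * permE := by decide
  have hne : (permE * permD) ^ 3 * permG * ((permE * permD) ^ 3)⁻¹ ≠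
      (permB * permD) ^ 3 * permG * ((permB * permD) ^ 3)⁻¹ := by decide
  exact ⟨hgd, hdbd, hded, hne,
    not_propertyTSK_of_counterexample hdbd.symm hded.symm hgd hne⟩
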